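/- Let θ₁, θ₂, θ̃₁, θ̃₂ ∈ ℝ^d with ⟨θ₁, θ̃₁⟩ > 0 and ⟨θ₁, θ̃₂⟩ > 0, let ρ₁, ρ₂ > 0, and define S(θ) = (ρ₂‖θ₁‖⟨θ₂, θ⟩)/(ρ₁‖θ₂‖⟨θ₁, θ⟩). Let θ̄ = (n₁'θ̃₁ + n₂'θ̃₂)/(n₁' + n₂') for positive integers n₁', n₂'. Then S(θ̄) lies between S(θ̃₁) and S(θ̃₂): min(S(θ̃₁), S(θ̃₂)) ≤ S(θ̄) ≤ max(S(θ̃₁), S(θ̃₂)). -/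
import Mathlib


open RealInnerProductSpace

/-- Effective-robustness slope of the probit-accuracy line induced by training
direction `θ`, for test distributions `(θ₁, ρ₁)` and `(θ₂, ρ₂)`. -/
noncomputable def slopeFn {d : ℕ} (θ₁ θ₂ : EuclideanSpace ℝ (Fin d)) (ρ₁ ρ₂ : ℝ)
    (θ : EuclideanSpace ℝ (Fin d)) : ℝ :=
  (ρ₂ * ‖θ₁‖ * ⟪θ₂, θ⟫) / (ρ₁ * ‖θ₂‖ * ⟪θ₁, θ⟫)

private lemma mediant_between {a₁ a₂ b₁ b₂ w₁ w₂ : ℝ}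
    (hb₁ : 0 < b₁) (hb₂ : 0 < b₂) (hw₁ : 0 < w₁) (hw₂ : 0 < w₂) :
    min (a₁ / b₁) (a₂ / b₂) ≤ (w₁ * a₁ + w₂ * a₂) / (w₁ * b₁ + w₂ * b₂) ∧
    (w₁ * a₁ + w₂ * a₂) / (w₁ * b₁ + w₂ * b₂) ≤ max (a₁ / b₁) (a₂ / b₂) := by
  have hb : 0 < w₁ * b₁ + w₂ * b₂ := by positivity
  rcases le_total (a₁ / b₁) (a₂ / b₂) with h | h
  · have hx : a₁ * b₂ ≤ a₂ * b₁ := by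
      rw [div_le_div_iff₀ hb₁ hb₂] at h; linarith
    constructor
    · rw [min_eq_left h, div_le_div_iff₀ hb₁ hb]
      nlinarith
    · rw [max_eq_right h, div_le_div_iff₀ hb hb₂]
      nlinarith
  · have hx : a₂ * b₁ ≤ a₁ * b₂ := by
      rw [div_le_div_iff₀ hb₂ hb₁] at h; linarith
    constructor
    · rw [min_eq_right h, div_le_div_iff₀ hb₂ hb]
      nlinarith
    · rw [max_eq_left h, div_le_div_iff₀ hb hb₁]
      nlinarith

/-- input mixing: for `θ̄ = (n₁'θ̃₁ + n₂'θ̃₂)/(n₁' + n₂')` with positive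
integer sample counts, the slope `S(θ̄)` lies between `S(θ̃₁)` and `S(θ̃₂)`. -/
theorem slope_of_mixture_between {d : ℕ} (θ₁ θ₂ θt₁ θt₂ : EuclideanSpace ℝ (Fin d))
    (ρ₁ ρ₂ : ℝ) (hρ₁ : 0 < ρ₁) (hρ₂ : 0 < ρ₂)
    (h1 : 0 < ⟪θ₁, θt₁⟫) (h2 : 0 < ⟪θ₁, θt₂⟫)
    (n₁' n₂' : ℕ) (hn₁ : 0 < n₁') (hn₂ : 0 < n₂') :
    min (slopeFn θ₁ θ₂ ρ₁ ρ₂ θt₁) (slopeFn θ₁ θ₂ ρ₁ ρ₂ θt₂)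
      ≤ slopeFn θ₁ θ₂ ρ₁ ρ₂ (((n₁' : ℝ) + (n₂' : ℝ))⁻¹ • ((n₁' : ℝ) • θt₁ + (n₂' : ℝ) • θt₂))
    ∧ slopeFn θ₁ θ₂ ρ₁ ρ₂ (((n₁' : ℝ) + (n₂' : ℝ))⁻¹ • ((n₁' : ℝ) • θt₁ + (n₂' : ℝ) • θt₂))
      ≤ max (slopeFn θ₁ θ₂ ρ₁ ρ₂ θt₁) (slopeFn θ₁ θ₂ ρ₁ ρ₂ θt₂) := by
  by_cases hθ₂ : θ₂ = 0
  · simp [slopeFn, hθ₂]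
  have hn2 : (0:ℝ) < ‖θ₂‖ := norm_pos_iff.mpr hθ₂
  set w₁ : ℝ := (n₁' : ℝ) with hw₁def
  set w₂ : ℝ := (n₂' : ℝ) with hw₂def
  have hw₁ : 0 < w₁ := by rw [hw₁def]; exact_mod_cast hn₁
  have hw₂ : 0 < w₂ := by rw [hw₂def]; exact_mod_cast hn₂
  set a₁ : ℝ := ρ₂ * ‖θ₁‖ * ⟪θ₂, θt₁⟫ with ha₁
  set a₂ : ℝ := ρ₂ * ‖θ₁‖ * ⟪θ₂, θt₂⟫ with ha₂
  set b₁ : ℝ := ρ₁ * ‖θ₂‖ * ⟪θ₁, θt₁⟫ with hb₁def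
  set b₂ : ℝ := ρ₁ * ‖θ₂‖ * ⟪θ₁, θt₂⟫ with hb₂def
  have hb₁ : 0 < b₁ := by positivity
  have hb₂ : 0 < b₂ := by positivity
  have hkey : slopeFn θ₁ θ₂ ρ₁ ρ₂ ((w₁ + w₂)⁻¹ • (w₁ • θt₁ + w₂ • θt₂))
      = (w₁ * a₁ + w₂ * a₂) / (w₁ * b₁ + w₂ * b₂) := by
    have hc : (0:ℝ) < (w₁ + w₂)⁻¹ := by positivity
    unfold slopeFn
    simp only [inner_smul_right, inner_add_right]
    rw [ha₁, ha₂, hb₁def, hb₂def]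
    rw [show ρ₂ * ‖θ₁‖ * ((w₁ + w₂)⁻¹ * (w₁ * ⟪θ₂, θt₁⟫ + w₂ * ⟪θ₂, θt₂⟫))
        = (w₁ + w₂)⁻¹ * (w₁ * (ρ₂ * ‖θ₁‖ * ⟪θ₂, θt₁⟫) + w₂ * (ρ₂ * ‖θ₁‖ * ⟪θ₂, θt₂⟫)) by ring,
      show ρ₁ * ‖θ₂‖ * ((w₁ + w₂)⁻¹ * (w₁ * ⟪θ₁, θt₁⟫ + w₂ * ⟪θ₁, θt₂⟫))
        = (w₁ + w₂)⁻¹ * (w₁ * (ρ₁ * ‖θ₂‖ * ⟪θ₁, θt₁⟫) + w₂ * (ρ₁ * ‖θ₂‖ * ⟪θ₁, θt₂⟫)) by ring]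
    exact mul_div_mul_left _ _ (ne_of_gt hc)
  have h1' : slopeFn θ₁ θ₂ ρ₁ ρ₂ θt₁ = a₁ / b₁ := rfl
  have h2' : slopeFn θ₁ θ₂ ρ₁ ρ₂ θt₂ = a₂ / b₂ := rfl
  rw [hkey, h1', h2']
  exact mediant_between hb₁ hb₂ hw₁ hw₂
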